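/- Let Y = {y_1 < y_2 < ... < y_r} ⊆ Ω_n and let ḡ ∈ POPI_n(Y) be the r-cycle sending y_i to y_{i+1} (indices mod r) with domain Y. If α, β ∈ POPI_n(Y) both have rank r and Dom(α) = Dom(β), then α = β·ḡ^t for some 0 ≤ t ≤ r − 1. -/

import Mathlib

/-! An injective orientation-preserving partial map `γ` of rank `r = |Y|` with image in `Y`
sends its domain `d_0 < ⋯ < d_(r-1)` onto `Y = {y_0 < ⋯ < y_(r-1)}` by a cyclic shift,
`d_j ↦ y_(j+c mod r)`: read along the domain, its images form a list that some rotation sorts,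
so the list is itself a rotation of the sorted list of `Y`. As `ḡᵗ` shifts indices by `t`,
maps `α`, `β` with a common domain and shifts `a`, `b` satisfy `α = β ḡᵗ`
for `t ≡ a - b (mod r)`. -/

open scoped Classical

namespace POPIpaper

/-- Partial transformations of `Ω_n = {1,…,n}`, modelled on `Fin n`. -/
abbrev PT (n : ℕ) := Fin n → Option (Fin n)

/-- Composition of partial transformations (apply `α` first, then `β`). -/
def comp {n : ℕ} (α β : PT n) : PT n := fun x => (α x).bind β

/-- Domain of a partial transformation. -/
noncomputable def dom {n : ℕ} (α : PT n) : Finset (Fin n) :=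
  Finset.univ.filter (fun x => (α x).isSome)

/-- Image of a partial transformation. -/
noncomputable def im {n : ℕ} (α : PT n) : Finset (Fin n) :=
  Finset.univ.filter (fun y => ∃ x, α x = some y)

/-- rank(α) = |Im(α)|. -/
noncomputable def rank {n : ℕ} (α : PT n) : ℕ := (im α).card

/-- Injectivity of a partial transformation. -/
def Inj {n : ℕ} (α : PT n) : Prop :=
  ∀ x y z : Fin n, α x = some z → α y = some z → x = y

/-- Orientation-preserving: the sequence of images, taken along the increasing
enumeration of the domain, is cyclic, i.e. some rotation of it is sorted. -/
def OP {n : ℕ} (α : PT n) : Prop :=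
  ∃ k : ℕ, (((List.finRange n).filterMap α).rotate k).Pairwise (· ≤ ·)

/-- The semigroup `POPI_n(Y)` as a set of partial transformations:
injective, orientation-preserving, with image contained in `Y`. -/
def POPI (n : ℕ) (Y : Finset (Fin n)) : Set (PT n) :=
  {α | Inj α ∧ OP α ∧ ∀ x y : Fin n, α x = some y → y ∈ Y}

/-- Regularity of `α` as an element of the subsemigroup `S`. -/
def IsRegularIn {n : ℕ} (S : Set (PT n)) (α : PT n) : Prop :=
  ∃ β ∈ S, comp (comp α β) α = α

/-- The partial identity on a subset `A`. -/
def idp {n : ℕ} (A : Finset (Fin n)) : PT n :=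
  fun x => if x ∈ A then some x else none

/-- Fixed points of a partial transformation. -/
noncomputable def fix {n : ℕ} (α : PT n) : Finset (Fin n) :=
  Finset.univ.filter (fun x => α x = some x)

/-- Green's relation ℒ on the set `S`: `S¹α = S¹β`. -/
def LRel {n : ℕ} (S : Set (PT n)) (α β : PT n) : Prop :=
  (α = β ∨ ∃ γ ∈ S, comp γ β = α) ∧ (β = α ∨ ∃ γ ∈ S, comp γ α = β)

/-- Green's relation ℛ on the set `S`: `αS¹ = βS¹`. -/
def RRel {n : ℕ} (S : Set (PT n)) (α β : PT n) : Prop :=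
  (α = β ∨ ∃ γ ∈ S, comp β γ = α) ∧ (β = α ∨ ∃ γ ∈ S, comp α γ = β)

/-- Green's relation ℋ = ℒ ∩ ℛ. -/
def HRel {n : ℕ} (S : Set (PT n)) (α β : PT n) : Prop :=
  LRel S α β ∧ RRel S α β

/-- Green's relation 𝒟 = ℒ ∘ ℛ. -/
def DRel {n : ℕ} (S : Set (PT n)) (α β : PT n) : Prop :=
  ∃ γ ∈ S, LRel S α γ ∧ RRel S γ β

/-- `Φ` is a semigroup isomorphism from the subsemigroup `S` onto `T`. -/
def IsIso {n : ℕ} (S T : Set (PT n)) (Φ : PT n → PT n) : Prop :=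
  Set.BijOn Φ S T ∧ ∀ a ∈ S, ∀ b ∈ S, Φ (comp a b) = comp (Φ a) (Φ b)

/-- The product `β * l₁ * ⋯ * l_k` of a nonempty list of partial transformations. -/
def prodList {n : ℕ} (β : PT n) (l : List (PT n)) : PT n := l.foldl comp β

/-- Powers of a partial transformation, with `pow1 γ 0` the identity. -/
def pow1 {n : ℕ} (γ : PT n) : ℕ → PT n
  | 0 => fun x => some x
  | k + 1 => comp (pow1 γ k) γ

end POPIpaper

theorem List.apply_eq_getElem?_filterMap {α β : Type*} {f : α → Option β} {l : List α}
    {j : ℕ} {x : α} (hx : (l.filter fun a => (f a).isSome)[j]? = some x) :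
    f x = (l.filterMap f)[j]? := by
  have h := congrArg (·[j]?) (List.map_filterMap_some_eq_filter_map_isSome (f := f) (l := l))
  simp only [List.filter_map, List.getElem?_map, Function.comp_def, hx] at h
  cases hj : (l.filterMap f)[j]? <;> simp_all

namespace POPIpaper

variable {n : ℕ}

theorem mem_dom {γ : PT n} {x : Fin n} : x ∈ dom γ ↔ (γ x).isSome := by
  simp [dom]

theorem sort_dom (γ : PT n) :
    (dom γ).sort = (List.finRange n).filter fun x => (γ x).isSome := by
  refine (Finset.sortedLT_sort _).eq_of_mem_iff ?_ fun x => by simp [mem_dom]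
  exact List.sortedLT_iff_pairwise.mpr ((List.sortedLT_finRange n).pairwise.filter _)

theorem im_eq_of_rank_eq_card {Y : Finset (Fin n)} {γ : PT n}
    (hY : ∀ x y, γ x = some y → y ∈ Y) (hrank : rank γ = Y.card) : im γ = Y := by
  refine Finset.eq_of_subset_of_card_le (fun y hy => ?_) hrank.ge
  obtain ⟨x, hx⟩ := (Finset.mem_filter.mp hy).2
  exact hY x y hx

theorem exists_rotate_filterMap_eq_sort_im {γ : PT n} (hinj : Inj γ) (hop : OP γ) :
    ∃ k, ((List.finRange n).filterMap γ).rotate k = (im γ).sort := by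
  obtain ⟨k, hk⟩ := hop
  refine ⟨k, List.Perm.eq_of_pairwise' hk (Finset.pairwise_sort _ _) ?_⟩
  have hnodup : ((List.finRange n).filterMap γ).Nodup := (List.nodup_finRange n).filterMap hinj
  rw [List.perm_ext_iff_of_nodup (List.nodup_rotate.mpr hnodup) (Finset.sort_nodup _ _)]
  intro y
  simp [im]

/-- `cycEnum Y i` is `y_(i mod r)` for the increasing enumeration `y_0 < ⋯ < y_(r-1)` of `Y`,
as an `Option` so that no bound proof is needed (it is `none` only when `Y = ∅`). -/
noncomputable def cycEnum (Y : Finset (Fin n)) (i : ℕ) : Option (Fin n) :=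
  Y.sort[i % Y.card]?

theorem cycEnum_congr {Y : Finset (Fin n)} {i i' : ℕ} (h : i ≡ i' [MOD Y.card]) :
    cycEnum Y i = cycEnum Y i' := by
  rw [cycEnum, cycEnum, h]

theorem cycEnum_eq_orderIsoOfFin {Y : Finset (Fin n)} {r i : ℕ} (hY : Y.card = r) (hi : i < r) :
    cycEnum Y i = some (Y.orderIsoOfFin hY ⟨i, hi⟩ : Fin n) := by
  subst hY
  simp [cycEnum, Nat.mod_eq_of_lt hi, Finset.orderEmbOfFin_apply]

theorem exists_apply_eq_cycEnum {Y : Finset (Fin n)} {γ : PT n} (hγ : γ ∈ POPI n Y)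
    (hrank : rank γ = Y.card) :
    ∃ c, ∀ j x, (dom γ).sort[j]? = some x → γ x = cycEnum Y (j + c) := by
  obtain ⟨hinj, hop, hY⟩ := hγ
  obtain ⟨k, hk⟩ := exists_rotate_filterMap_eq_sort_im hinj hop
  rw [im_eq_of_rank_eq_card hY hrank, List.rotate_eq_iff, Finset.length_sort] at hk
  refine ⟨Y.card - k % Y.card, fun j x hx => ?_⟩
  rw [sort_dom] at hx
  have hγx := List.apply_eq_getElem?_filterMap hx
  have hj : j < Y.sort.length := by
    have : (γ x).isSome := by simpa using (List.mem_filter.mp (List.mem_of_getElem? hx)).2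
    rwa [hγx, hk, isSome_getElem?, List.length_rotate] at this
  rw [hγx, hk, List.getElem?_rotate hj, cycEnum, Finset.length_sort]

theorem bind_pow1_of_bind_eq_succ {s : ℕ → Option (Fin n)} {g : PT n}
    (h : ∀ i, (s i).bind g = s (i + 1)) (i t : ℕ) : (s i).bind (pow1 g t) = s (i + t) := by
  induction t with
  | zero => cases s i <;> rfl
  | succ t ih =>
    change (s i).bind (fun x => (pow1 g t x).bind g) = _
    rw [← Option.bind_assoc, ih, h, Nat.add_assoc]

theorem cycEnum_bind_eq_succ {Y : Finset (Fin n)} {r : ℕ} (hY : Y.card = r) (hr : 0 < r)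
    {gbar : PT n} (hg : ∀ (i : ℕ) (hi : i < r),
      gbar ((Y.orderIsoOfFin hY ⟨i, hi⟩ : Y) : Fin n) =
        some ((Y.orderIsoOfFin hY ⟨(i + 1) % r, Nat.mod_lt _ hr⟩ : Y) : Fin n)) (i : ℕ) :
    (cycEnum Y i).bind gbar = cycEnum Y (i + 1) := by
  have hmod : i % r < r := Nat.mod_lt _ hr
  have hmodEq : ∀ m, m % r ≡ m [MOD Y.card] := fun m => hY ▸ Nat.mod_modEq m r
  calc (cycEnum Y i).bind gbar = (cycEnum Y (i % r)).bind gbar := by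
        rw [cycEnum_congr (hmodEq i)]
    _ = cycEnum Y ((i % r + 1) % r) := by
        rw [cycEnum_eq_orderIsoOfFin hY hmod, Option.bind_some, hg _ hmod,
          cycEnum_eq_orderIsoOfFin hY]
    _ = cycEnum Y (i + 1) := cycEnum_congr ((hmodEq _).trans ((hmodEq i).add_right 1))

theorem apply_eq_none_of_notMem_dom {γ : PT n} {x : Fin n} (hx : x ∉ dom γ) : γ x = none := by
  simpa [mem_dom] using hx

theorem eq_comp_pow_gbar_general {n r : ℕ} (Y : Finset (Fin n)) (hY : Y.card = r)
    (hr : 0 < r) (gbar : PT n)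
    (hg : ∀ (i : ℕ) (hi : i < r),
      gbar ((Y.orderIsoOfFin hY ⟨i, hi⟩ : Y) : Fin n) =
        some ((Y.orderIsoOfFin hY ⟨(i + 1) % r, Nat.mod_lt _ hr⟩ : Y) : Fin n))
    (α β : PT n) (hα : α ∈ POPI n Y) (hβ : β ∈ POPI n Y)
    (hrα : rank α = r) (hrβ : rank β = r) (hdom : dom α = dom β) :
    ∃ t < r, α = comp β (pow1 gbar t) := by
  obtain ⟨a, ha⟩ := exists_apply_eq_cycEnum hα (hrα.trans hY.symm)
  obtain ⟨b, hb⟩ := exists_apply_eq_cycEnum hβ (hrβ.trans hY.symm)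
  refine ⟨(a + r - b % r) % r, Nat.mod_lt _ hr, funext fun x => ?_⟩
  by_cases hx : x ∈ dom α
  · obtain ⟨j, hj⟩ := List.mem_iff_getElem?.mp ((Finset.mem_sort (· ≤ ·)).mpr hx)
    rw [comp, ha j x hj, hb j x (hdom ▸ hj),
      bind_pow1_of_bind_eq_succ (cycEnum_bind_eq_succ hY hr hg)]
    apply cycEnum_congr
    rw [hY]
    calc j + a ≡ j + a + r [MOD r] := Nat.add_modEq_right.symm
      _ = j + b % r + (a + r - b % r) := by have := Nat.mod_lt b hr; omega
      _ ≡ j + b + (a + r - b % r) % r [MOD r] :=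
          ((Nat.mod_modEq b r).add_left j).add (Nat.mod_modEq _ r).symm
  · have hxβ : x ∉ dom β := hdom ▸ hx
    rw [comp, apply_eq_none_of_notMem_dom hx, apply_eq_none_of_notMem_dom hxβ, Option.bind_none]

/-- if `α, β ∈ POPI_n(Y)` have rank `r = |Y|` and the same domain,
then `α = β·ḡᵗ` for some `0 ≤ t ≤ r-1`, where `ḡ` is the `r`-cycle on `Y`. -/
theorem eq_comp_pow_gbar {n r : ℕ} (Y : Finset (Fin n)) (hY : Y.card = r)
    (hr : 0 < r) (gbar : PT n) (hgdom : dom gbar = Y)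
    (hg : ∀ (i : ℕ) (hi : i < r),
      gbar ((Y.orderIsoOfFin hY ⟨i, hi⟩ : Y) : Fin n) =
        some ((Y.orderIsoOfFin hY ⟨(i + 1) % r, Nat.mod_lt _ hr⟩ : Y) : Fin n))
    (α β : PT n) (hα : α ∈ POPI n Y) (hβ : β ∈ POPI n Y)
    (hrα : rank α = r) (hrβ : rank β = r) (hdom : dom α = dom β) :
    ∃ t < r, α = comp β (pow1 gbar t) :=
  eq_comp_pow_gbar_general Y hY hr gbar hg α β hα hβ hrα hrβ hdom

end POPIpaper
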